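/- Let C ∈ Matrix (Fin 3) (Fin 3) ℝ be skew-symmetric (Cᵀ = −C), let A ∈ Matrix (Fin 3) (Fin 2) ℝ be fixed, let E : ℝ → Matrix (Fin 3) (Fin 2) ℝ be differentiable with E'(s) = C (E(s) + A) for all s ∈ ℝ, and let v ∈ ℝ³ satisfy C v = 0. Then the function s ↦ E(s)ᵀ v (the ℝ²-valued function of components vᵀ E(s)) is constant on ℝ. (First integrals U₂ = n⁰E^e and U₄ = n⁰K^e of the characteristic system, since the normal n⁰ annihilates the alternator tensor c.) -/

import Mathlib

open Matrix

/-!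
Skew-symmetry turns `C v = 0` into `vᵀ C = 0`, so `vᵀ E' = vᵀ C (E + A) = 0`: the row vector
`vᵀ E` has zero derivative and is therefore constant.
-/

variable {m n : Type*} [Fintype m]

theorem Matrix.vecMul_eq_zero_of_transpose_eq_neg {R : Type*} [CommRing R] {C : Matrix m m R}
    (hC : Cᵀ = -C) {v : m → R} (hv : C *ᵥ v = 0) : v ᵥ* C = 0 := by
  rw [← mulVec_transpose, hC, neg_mulVec, hv, neg_zero]

theorem hasDerivAt_vecMul_apply {𝕜 : Type*} [NontriviallyNormedField 𝕜]
    {E : 𝕜 → Matrix m n 𝕜} {E' : Matrix m n 𝕜} {s : 𝕜}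
    (hE : ∀ i j, HasDerivAt (fun u => E u i j) (E' i j) s) (v : m → 𝕜) (j : n) :
    HasDerivAt (fun u => (v ᵥ* E u) j) ((v ᵥ* E') j) s := by
  simp only [vecMul, dotProduct]
  exact HasDerivAt.fun_sum fun i _ => (hE i j).const_mul (v i)

theorem vecMul_eq_of_hasDerivAt {E E' : ℝ → Matrix m n ℝ}
    (hE : ∀ s i j, HasDerivAt (fun u => E u i j) (E' s i j) s) {v : m → ℝ}
    (hv : ∀ s, v ᵥ* E' s = 0) (s t : ℝ) : v ᵥ* E s = v ᵥ* E t := by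
  funext j
  have hderiv : ∀ u, HasDerivAt (fun u => (v ᵥ* E u) j) 0 u := fun u => by
    simpa [hv u] using hasDerivAt_vecMul_apply (hE u) v j
  exact is_const_of_deriv_eq_zero (fun u => (hderiv u).differentiableAt)
    (fun u => (hderiv u).deriv) s t

theorem first_integral_U2_U4
    (C : Matrix (Fin 3) (Fin 3) ℝ) (hC : Cᵀ = -C)
    (A : Matrix (Fin 3) (Fin 2) ℝ)
    (E : ℝ → Matrix (Fin 3) (Fin 2) ℝ)
    (hE : ∀ (s : ℝ) (i : Fin 3) (j : Fin 2),
      HasDerivAt (fun u => E u i j) ((C * (E s + A)) i j) s)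
    (v : Fin 3 → ℝ) (hv : C.mulVec v = 0) :
    ∀ s : ℝ, (E s)ᵀ.mulVec v = (E 0)ᵀ.mulVec v := by
  have hvC : v ᵥ* C = 0 := vecMul_eq_zero_of_transpose_eq_neg hC hv
  intro s
  simp only [mulVec_transpose]
  exact vecMul_eq_of_hasDerivAt hE
    (fun t => by rw [← vecMul_vecMul, hvC, zero_vecMul]) s 0
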